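/- arXiv:2402.03029 — 7 statements merged into one kernel-verified Lean document; each statement's English description precedes it below -/
import Mathlib

section
/- Let A be an m×n complex matrix, E an n×n matrix, F an m×m matrix. The conditions 'E·A⁽¹⁾·A = E and A·A⁽¹⁾·F = F for some inner inverse A⁽¹⁾' are equivalent to 'null(A) ⊆ null(E) and range(F) ⊆ range(A)'. (Precisely: given E² = E, F² = F, AE = FA, the EF-inverse of A exists if and only if ker(A) ⊆ ker(E) and col(F) ⊆ col(A).) -/
/-!
Over a field every matrix `A` has an inner inverse `G` (`A G A = A`). If `ker A ⊆ ker E` then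
`E G A = E`, because `G A v - v ∈ ker A`; dually, if `col F ⊆ col A` then `A G F = F`. With
`E² = E`, `F² = F` and `A E = F A`, the matrix `X = E G F` is then the EF-inverse. Conversely
`X A = E` and `A X = F` force `ker A ⊆ ker E` and `col F ⊆ col A`.
-/

open LinearMap

theorem LinearMap.exists_comp_comp_eq_self {K V W : Type*} [DivisionRing K] [AddCommGroup V]
    [Module K V] [AddCommGroup W] [Module K W] (f : V →ₗ[K] W) :
    ∃ g : W →ₗ[K] V, f ∘ₗ g ∘ₗ f = f := by
  obtain ⟨s, hs⟩ := f.rangeRestrict.exists_rightInverse_of_surjective f.range_rangeRestrict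
  obtain ⟨g, hg⟩ := LinearMap.exists_extend s
  refine ⟨g, ?_⟩
  calc f ∘ₗ g ∘ₗ f = (range f).subtype ∘ₗ f.rangeRestrict ∘ₗ (g ∘ₗ (range f).subtype)
        ∘ₗ f.rangeRestrict := rfl
    _ = f := by rw [hg, ← LinearMap.comp_assoc f.rangeRestrict s, hs, LinearMap.id_comp]; rfl

namespace Matrix

variable {l m n R : Type*} [Fintype m] [Fintype n]

theorem exists_mul_mul_eq_self [DecidableEq m] [DecidableEq n] [Field R] (A : Matrix m n R) :
    ∃ G : Matrix n m R, A * G * A = A := by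
  obtain ⟨g, hg⟩ := (toLin' A).exists_comp_comp_eq_self
  refine ⟨LinearMap.toMatrix' g, toLin'.injective ?_⟩
  rwa [toLin'_mul, toLin'_mul, toLin'_toMatrix', LinearMap.comp_assoc]

def IsEFInverse [Semiring R] (A : Matrix m n R) (E : Matrix n n R) (F : Matrix m m R)
    (X : Matrix n m R) : Prop :=
  X * A * X = X ∧ X * A = E ∧ A * X = F

theorem isEFInverse_mul_mul [Semiring R] {A : Matrix m n R} {G : Matrix n m R}
    {E : Matrix n n R} {F : Matrix m m R} (hE2 : E * E = E) (hF2 : F * F = F)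
    (hEF : A * E = F * A) (hEGA : E * G * A = E) (hAGF : A * G * F = F) :
    A.IsEFInverse E F (E * G * F) := by
  have hXA : E * G * F * A = E := by
    rw [Matrix.mul_assoc _ F, ← hEF, ← Matrix.mul_assoc, hEGA, hE2]
  refine ⟨?_, hXA, ?_⟩
  · rw [hXA, ← Matrix.mul_assoc, ← Matrix.mul_assoc, hE2]
  · rw [← Matrix.mul_assoc, ← Matrix.mul_assoc, hEF, Matrix.mul_assoc F, Matrix.mul_assoc F,
      hAGF, hF2]

variable [CommRing R]

theorem mul_mul_eq_of_ker_le {A : Matrix m n R} {G : Matrix n m R} {E : Matrix l n R}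
    (hG : A * G * A = A) (hker : ker A.mulVecLin ≤ ker E.mulVecLin) : E * G * A = E := by
  classical
  refine ext_of_mulVec_single fun i => ?_
  set v : n → R := Pi.single i 1
  have hv : G *ᵥ A *ᵥ v - v ∈ ker A.mulVecLin := by
    rw [mem_ker, mulVecLin_apply, mulVec_sub, mulVec_mulVec, mulVec_mulVec, hG, sub_self]
  have hEv := hker hv
  rwa [mem_ker, mulVecLin_apply, mulVec_sub, sub_eq_zero, mulVec_mulVec, mulVec_mulVec] at hEv

theorem mul_mul_eq_of_range_le {A : Matrix m n R} {G : Matrix n m R} {F : Matrix m l R}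
    [Fintype l] (hG : A * G * A = A) (hrange : range F.mulVecLin ≤ range A.mulVecLin) :
    A * G * F = F := by
  classical
  refine ext_of_mulVec_single fun i => ?_
  obtain ⟨w, hw⟩ := hrange ⟨Pi.single i 1, rfl⟩
  rw [← mulVec_mulVec, ← mulVecLin_apply F, ← hw, mulVecLin_apply, mulVec_mulVec, hG]

theorem IsEFInverse.ker_le {A : Matrix m n R} {E : Matrix n n R} {F : Matrix m m R}
    {X : Matrix n m R} (h : A.IsEFInverse E F X) : ker A.mulVecLin ≤ ker E.mulVecLin := by
  rw [← h.2.1, mulVecLin_mul]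
  exact ker_le_ker_comp _ _

theorem IsEFInverse.range_le {A : Matrix m n R} {E : Matrix n n R} {F : Matrix m m R}
    {X : Matrix n m R} (h : A.IsEFInverse E F X) : range F.mulVecLin ≤ range A.mulVecLin := by
  rw [← h.2.2, mulVecLin_mul]
  exact range_comp_le_range _ _

end Matrix

theorem ef_inverse_exists_iff {m n : ℕ} (A : Matrix (Fin m) (Fin n) ℂ)
    (E : Matrix (Fin n) (Fin n) ℂ) (F : Matrix (Fin m) (Fin m) ℂ)
    (hE2 : E * E = E) (hF2 : F * F = F) (hEF : A * E = F * A) :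
    (∃ X : Matrix (Fin n) (Fin m) ℂ, X * A * X = X ∧ X * A = E ∧ A * X = F) ↔
    (LinearMap.ker A.mulVecLin ≤ LinearMap.ker E.mulVecLin ∧
     LinearMap.range F.mulVecLin ≤ LinearMap.range A.mulVecLin) := by
  refine ⟨fun ⟨X, hX⟩ => ⟨Matrix.IsEFInverse.ker_le hX, Matrix.IsEFInverse.range_le hX⟩, ?_⟩
  rintro ⟨hker, hrange⟩
  obtain ⟨G, hG⟩ := A.exists_mul_mul_eq_self
  exact ⟨E * G * F, Matrix.isEFInverse_mul_mul hE2 hF2 hEF (Matrix.mul_mul_eq_of_ker_le hG hker)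
    (Matrix.mul_mul_eq_of_range_le hG hrange)⟩
end

section
/- Let X be the (B,C)-inverse of A (XAB = B, CAX = C, range(X) ⊆ range(B), range(X*) ⊆ range(C*)). Then X is the EF-inverse of A with E = XA and F = AX; in particular E and F are idempotent, AE = FA, and X = E·A⁽¹⁾·F for any inner inverse A⁽¹⁾ of A. -/
/-! The range condition lets `X` factor as `X = B * Y`, so `X * A * X = (X * A * B) * Y = B * Y = X`:
`X` is an outer inverse of `A`. Idempotency of `X * A` and `A * X` and the formula
`X = (X * A) * A₁ * (A * X)` are then identities in any semigroup. -/

open Matrix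

theorem Matrix.exists_mul_eq_of_range_mulVecLin_le {R m n k : Type*} [CommSemiring R]
    [Fintype n] [Fintype k] [DecidableEq k] {B : Matrix m n R} {X : Matrix m k R}
    (h : LinearMap.range X.mulVecLin ≤ LinearMap.range B.mulVecLin) :
    ∃ Y : Matrix n k R, B * Y = X := by
  choose y hy using fun j : k => h ⟨Pi.single j 1, rfl⟩
  refine ⟨(Matrix.of y)ᵀ, ext_of_mulVec_single fun j => ?_⟩
  rw [← mulVec_mulVec, mulVec_single_one, col_transpose]
  exact hy j

section Semigroup

variable {S : Type*} [Semigroup S] {a x : S}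

theorem mul_mul_eq_self_of_mul_mul_eq_of_eq_mul {b y : S} (hb : x * a * b = b) (hx : x = b * y) :
    x * a * x = x := by
  nth_rw 2 [hx]
  rw [← mul_assoc, hb, hx]

theorem isIdempotentElem_mul_of_mul_mul_eq_self (h : x * a * x = x) :
    IsIdempotentElem (x * a) := by
  rw [IsIdempotentElem, ← mul_assoc, h]

theorem isIdempotentElem_mul_of_mul_mul_eq_self' (h : x * a * x = x) :
    IsIdempotentElem (a * x) := by
  rw [IsIdempotentElem, mul_assoc, ← mul_assoc x, h]

theorem eq_mul_mul_mul_of_mul_mul_eq_self {a₁ : S} (h : x * a * x = x) (ha : a * a₁ * a = a) :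
    x = x * a * a₁ * (a * x) := by
  conv_lhs => rw [← h, ← ha]
  simp only [mul_assoc]

end Semigroup

theorem bc_inverse_is_ef_inverse_general {n : ℕ} (A B X : Matrix (Fin n) (Fin n) ℂ)
    (h1 : X * A * B = B)
    (h3 : LinearMap.range X.mulVecLin ≤ LinearMap.range B.mulVecLin) :
    X * A * X = X ∧
    (X * A) * (X * A) = X * A ∧ (A * X) * (A * X) = A * X ∧
    A * (X * A) = (A * X) * A ∧
    ∀ A₁ : Matrix (Fin n) (Fin n) ℂ, A * A₁ * A = A →
      X = (X * A) * A₁ * (A * X) := by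
  obtain ⟨Y, hY⟩ := exists_mul_eq_of_range_mulVecLin_le h3
  have hXAX : X * A * X = X := mul_mul_eq_self_of_mul_mul_eq_of_eq_mul h1 hY.symm
  exact ⟨hXAX, isIdempotentElem_mul_of_mul_mul_eq_self hXAX,
    isIdempotentElem_mul_of_mul_mul_eq_self' hXAX, (mul_assoc A X A).symm,
    fun _ hA₁ => eq_mul_mul_mul_of_mul_mul_eq_self hXAX hA₁⟩

theorem bc_inverse_is_ef_inverse {n : ℕ} (A B C X : Matrix (Fin n) (Fin n) ℂ)
    (h1 : X * A * B = B) (h2 : C * A * X = C)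
    (h3 : LinearMap.range X.mulVecLin ≤ LinearMap.range B.mulVecLin)
    (h4 : LinearMap.range (Xᴴ).mulVecLin ≤ LinearMap.range (Cᴴ).mulVecLin) :
    X * A * X = X ∧
    (X * A) * (X * A) = X * A ∧ (A * X) * (A * X) = A * X ∧
    A * (X * A) = (A * X) * A ∧
    ∀ A₁ : Matrix (Fin n) (Fin n) ℂ, A * A₁ * A = A →
      X = (X * A) * A₁ * (A * X) :=
  bc_inverse_is_ef_inverse_general A B X h1 h3
end

section
/- Let X be the EF-inverse of A (XAX = X, XA = E, AX = F, with the existence conditions E·A⁽¹⁾·A = E and A·A⁽¹⁾·F = F for an inner inverse A⁽¹⁾, E² = E, F² = F, AE = FA). Then the following are equivalent: (a) AXA = A; (b) A = AE; (c) A = FA. -/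
theorem ef_inverse_inner_tfae_general {m n : ℕ} (A : Matrix (Fin m) (Fin n) ℂ)
    (E : Matrix (Fin n) (Fin n) ℂ) (F : Matrix (Fin m) (Fin m) ℂ)
    (hEF : A * E = F * A)
    (X : Matrix (Fin n) (Fin m) ℂ)
    (h3 : A * X = F) :
    (A * X * A = A ↔ A = A * E) ∧ (A = A * E ↔ A = F * A) := by
  rw [h3, ← hEF]
  exact ⟨eq_comm, Iff.rfl⟩

theorem ef_inverse_inner_tfae {m n : ℕ} (A : Matrix (Fin m) (Fin n) ℂ)
    (E : Matrix (Fin n) (Fin n) ℂ) (F : Matrix (Fin m) (Fin m) ℂ)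
    (A₁ : Matrix (Fin n) (Fin m) ℂ) (hinner : A * A₁ * A = A)
    (hE : E * A₁ * A = E) (hF : A * A₁ * F = F) (hEF : A * E = F * A)
    (hE2 : E * E = E) (hF2 : F * F = F)
    (X : Matrix (Fin n) (Fin m) ℂ) (hX : X = E * A₁ * F)
    (h1 : X * A * X = X) (h2 : X * A = E) (h3 : A * X = F) :
    (A * X * A = A ↔ A = A * E) ∧ (A = A * E ↔ A = F * A) :=
  ef_inverse_inner_tfae_general A E F hEF X h3
end

section
/- Let A = U · [[Σ, 0], [0, 0]] · V* be a block decomposition with Σ ∈ ℂ^{r×r} invertible and U ∈ ℂ^{m×m}, V ∈ ℂ^{n×n} unitary. Write E = V · [[E₁, E₂], [E₃, E₄]] · V* and F = U · [[F₁, F₂], [F₃, F₄]] · U* in conformal blocks. If E₁² = E₁, F₁² = F₁, Σ E₁ = F₁ Σ, E₃E₁ = E₃, F₁F₂ = F₂, and E₂ = 0, E₄ = 0, F₃ = 0, F₄ = 0, then X := V · [[E₁Σ⁻¹, E₁Σ⁻¹F₂], [E₃Σ⁻¹, E₃Σ⁻¹F₂]] · U* satisfies XAX = X, XA = E, and AX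 = F. -/
/-!
Since `Uᴴ U = 1` and `Vᴴ V = 1`, each identity reduces to a product of the middle block
matrices: `Σ⁻¹ Σ = 1` gives `XA = E`; `Σ E₁ Σ⁻¹ = F₁` and `F₁ F₂ = F₂` give `AX = F`;
and `XAX = EX = X` because `E₁² = E₁` and `E₃ E₁ = E₃`.
-/

open Matrix

namespace Matrix

variable {α : Type*} [Semiring α]

theorem mul_mul_mul_mul_of_mul_eq_one {k l m n o p : Type*} [Fintype l] [Fintype m]
    [Fintype n] [Fintype o] [DecidableEq m] {P : Matrix m l α} {Q : Matrix l m α}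
    (hPQ : P * Q = 1) (V : Matrix k n α) (M : Matrix n m α) (N : Matrix m o α)
    (W : Matrix o p α) : V * M * P * (Q * N * W) = V * (M * N) * W := by
  simp only [Matrix.mul_assoc]
  rw [← Matrix.mul_assoc P, hPQ, Matrix.one_mul]

variable {k l m : Type*} [Fintype k] [DecidableEq k]
  (S : Matrix k k α) [Invertible S]

theorem fromBlocks_efInverse_mul_fromBlocks [Fintype l] (E₁ : Matrix k k α)
    (E₃ : Matrix m k α) (F₂ : Matrix k l α) :
    fromBlocks (E₁ * ⅟S) (E₁ * ⅟S * F₂) (E₃ * ⅟S) (E₃ * ⅟S * F₂) *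
        (fromBlocks S 0 0 0 : Matrix (k ⊕ l) (k ⊕ m) α) =
      fromBlocks E₁ 0 E₃ 0 := by
  simp [fromBlocks_multiply, Matrix.mul_assoc]

theorem fromBlocks_mul_fromBlocks_efInverse [Fintype m] {E₁ F₁ : Matrix k k α}
    (E₃ : Matrix m k α) {F₂ : Matrix k l α} (hSE : S * E₁ = F₁ * S) (hF₁₂ : F₁ * F₂ = F₂) :
    (fromBlocks S 0 0 0 : Matrix (k ⊕ l) (k ⊕ m) α) *
        fromBlocks (E₁ * ⅟S) (E₁ * ⅟S * F₂) (E₃ * ⅟S) (E₃ * ⅟S * F₂) =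
      fromBlocks F₁ F₂ 0 0 := by
  have hSES : S * (E₁ * ⅟S) = F₁ := by
    rw [← Matrix.mul_assoc, hSE, Matrix.mul_assoc, mul_invOf_self, Matrix.mul_one]
  simp [fromBlocks_multiply, ← Matrix.mul_assoc S (E₁ * ⅟S), hSES, hF₁₂]

theorem fromBlocks_idempotent_mul_fromBlocks_efInverse [Fintype m] {E₁ : Matrix k k α}
    {E₃ : Matrix m k α} (F₂ : Matrix k l α) (hE₁ : E₁ * E₁ = E₁) (hE₃ : E₃ * E₁ = E₃) :
    (fromBlocks E₁ 0 E₃ 0 : Matrix (k ⊕ m) (k ⊕ m) α) *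
        fromBlocks (E₁ * ⅟S) (E₁ * ⅟S * F₂) (E₃ * ⅟S) (E₃ * ⅟S * F₂) =
      fromBlocks (E₁ * ⅟S) (E₁ * ⅟S * F₂) (E₃ * ⅟S) (E₃ * ⅟S * F₂) := by
  simp only [fromBlocks_multiply, ← Matrix.mul_assoc, hE₁, hE₃, Matrix.zero_mul, add_zero]

end Matrix

theorem ef_inverse_canonical_form_general {r s t : ℕ}
    (U : Matrix (Fin r ⊕ Fin s) (Fin r ⊕ Fin s) ℂ)
    (V : Matrix (Fin r ⊕ Fin t) (Fin r ⊕ Fin t) ℂ)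
    (hU : U * Uᴴ = 1 ∧ Uᴴ * U = 1) (hV : V * Vᴴ = 1 ∧ Vᴴ * V = 1)
    (S : Matrix (Fin r) (Fin r) ℂ) [Invertible S]
    (E₁ : Matrix (Fin r) (Fin r) ℂ) (E₃ : Matrix (Fin t) (Fin r) ℂ)
    (F₁ : Matrix (Fin r) (Fin r) ℂ) (F₂ : Matrix (Fin r) (Fin s) ℂ)
    (hE1 : E₁ * E₁ = E₁) (hSE : S * E₁ = F₁ * S)
    (hE3 : E₃ * E₁ = E₃) (hF12 : F₁ * F₂ = F₂)
    (A : Matrix (Fin r ⊕ Fin s) (Fin r ⊕ Fin t) ℂ)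
    (hA : A = U * (Matrix.fromBlocks S 0 0 0 : Matrix (Fin r ⊕ Fin s) (Fin r ⊕ Fin t) ℂ) * Vᴴ)
    (E : Matrix (Fin r ⊕ Fin t) (Fin r ⊕ Fin t) ℂ)
    (hE : E = V * Matrix.fromBlocks E₁ 0 E₃ 0 * Vᴴ)
    (F : Matrix (Fin r ⊕ Fin s) (Fin r ⊕ Fin s) ℂ)
    (hF : F = U * Matrix.fromBlocks F₁ F₂ 0 0 * Uᴴ)
    (X : Matrix (Fin r ⊕ Fin t) (Fin r ⊕ Fin s) ℂ)
    (hX : X = V * Matrix.fromBlocks (E₁ * ⅟S) (E₁ * ⅟S * F₂)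
                                    (E₃ * ⅟S) (E₃ * ⅟S * F₂) * Uᴴ) :
    X * A * X = X ∧ X * A = E ∧ A * X = F := by
  have hXA : X * A = E := by
    rw [hX, hA, hE, mul_mul_mul_mul_of_mul_eq_one hU.2,
      fromBlocks_efInverse_mul_fromBlocks]
  have hAX : A * X = F := by
    rw [hA, hX, hF, mul_mul_mul_mul_of_mul_eq_one hV.2,
      fromBlocks_mul_fromBlocks_efInverse S E₃ hSE hF12]
  refine ⟨?_, hXA, hAX⟩
  rw [hXA, hE, hX, mul_mul_mul_mul_of_mul_eq_one hV.2,
    fromBlocks_idempotent_mul_fromBlocks_efInverse S F₂ hE1 hE3]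

theorem ef_inverse_canonical_form {r s t : ℕ}
    (U : Matrix (Fin r ⊕ Fin s) (Fin r ⊕ Fin s) ℂ)
    (V : Matrix (Fin r ⊕ Fin t) (Fin r ⊕ Fin t) ℂ)
    (hU : U * Uᴴ = 1 ∧ Uᴴ * U = 1) (hV : V * Vᴴ = 1 ∧ Vᴴ * V = 1)
    (S : Matrix (Fin r) (Fin r) ℂ) [Invertible S]
    (E₁ : Matrix (Fin r) (Fin r) ℂ) (E₃ : Matrix (Fin t) (Fin r) ℂ)
    (F₁ : Matrix (Fin r) (Fin r) ℂ) (F₂ : Matrix (Fin r) (Fin s) ℂ)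
    (hE1 : E₁ * E₁ = E₁) (hF1 : F₁ * F₁ = F₁) (hSE : S * E₁ = F₁ * S)
    (hE3 : E₃ * E₁ = E₃) (hF12 : F₁ * F₂ = F₂)
    (A : Matrix (Fin r ⊕ Fin s) (Fin r ⊕ Fin t) ℂ)
    (hA : A = U * (Matrix.fromBlocks S 0 0 0 : Matrix (Fin r ⊕ Fin s) (Fin r ⊕ Fin t) ℂ) * Vᴴ)
    (E : Matrix (Fin r ⊕ Fin t) (Fin r ⊕ Fin t) ℂ)
    (hE : E = V * Matrix.fromBlocks E₁ 0 E₃ 0 * Vᴴ)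
    (F : Matrix (Fin r ⊕ Fin s) (Fin r ⊕ Fin s) ℂ)
    (hF : F = U * Matrix.fromBlocks F₁ F₂ 0 0 * Uᴴ)
    (X : Matrix (Fin r ⊕ Fin t) (Fin r ⊕ Fin s) ℂ)
    (hX : X = V * Matrix.fromBlocks (E₁ * ⅟S) (E₁ * ⅟S * F₂)
                                    (E₃ * ⅟S) (E₃ * ⅟S * F₂) * Uᴴ) :
    X * A * X = X ∧ X * A = E ∧ A * X = F :=
  ef_inverse_canonical_form_general U V hU hV S E₁ E₃ F₁ F₂ hE1 hSE hE3 hF12 A hA E hE F hF X hX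
end

section
/- Let A = U · [[Σ, 0], [0, 0]] · V* with Σ invertible and U, V unitary, and E, F as in the conformal block form. If the EF-inverse of A exists (i.e. XAX = X, XA = E, AX = F for some X), then necessarily E₂ = 0, E₄ = 0, F₃ = 0, F₄ = 0, E₁² = E₁, F₁² = F₁, Σ E₁ = F₁ Σ, E₃E₁ = E₃, and F₁F₂ = F₂. -/
/-!
Conjugating by the unitaries turns the EF-inverse `X` of `A` into an EF-inverse `Y = V* X U` of the
diagonal block matrix `D = [[Σ, 0], [0, 0]]` with idempotents `[[E₁, E₂], [E₃, E₄]]` and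
`[[F₁, F₂], [F₃, F₄]]`. Since `Y D` has vanishing right column and `D Y` vanishing bottom row, this
forces `E₂ = E₄ = 0` and `F₃ = F₄ = 0`. The remaining identities are the blocks of `E² = E`, `F² = F`
and `D E = F D`, which hold for every EF-inverse (`E = XA`, `F = AX`, `XAX = X`).
-/

open Matrix

variable {R : Type*} [Semiring R]

section Blocks

variable {k l m o p q : Type*} [Fintype m] [Fintype o]

theorem mul_fromBlocks_zero (Y : Matrix (k ⊕ q) (m ⊕ o) R) (S : Matrix m l R) :
    Y * (fromBlocks S 0 0 0 : Matrix (m ⊕ o) (l ⊕ p) R) =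
      (fromBlocks (Y.toBlocks₁₁ * S) 0 (Y.toBlocks₂₁ * S) 0 : Matrix (k ⊕ q) (l ⊕ p) R) := by
  conv_lhs => rw [← fromBlocks_toBlocks Y]
  simp only [fromBlocks_multiply, Matrix.mul_zero, add_zero]

theorem fromBlocks_zero_mul (S : Matrix l m R) (Y : Matrix (m ⊕ o) (k ⊕ q) R) :
    (fromBlocks S 0 0 0 : Matrix (l ⊕ p) (m ⊕ o) R) * Y =
      (fromBlocks (S * Y.toBlocks₁₁) (S * Y.toBlocks₁₂) 0 0 : Matrix (l ⊕ p) (k ⊕ q) R) := by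
  conv_lhs => rw [← fromBlocks_toBlocks Y]
  simp only [fromBlocks_multiply, Matrix.zero_mul, add_zero]

theorem isIdempotentElem_fromBlocks_zero_right_iff {E₁ : Matrix m m R} {E₃ : Matrix o m R} :
    IsIdempotentElem (fromBlocks E₁ (0 : Matrix m o R) E₃ 0) ↔ E₁ * E₁ = E₁ ∧ E₃ * E₁ = E₃ := by
  simp [IsIdempotentElem, fromBlocks_multiply]

theorem isIdempotentElem_fromBlocks_zero_bottom_iff {F₁ : Matrix m m R} {F₂ : Matrix m o R} :
    IsIdempotentElem (fromBlocks F₁ F₂ (0 : Matrix o m R) 0) ↔ F₁ * F₁ = F₁ ∧ F₁ * F₂ = F₂ := by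
  simp [IsIdempotentElem, fromBlocks_multiply]

end Blocks

def IsEFInverse {m n : Type*} [Fintype m] [Fintype n]
    (A : Matrix m n R) (X : Matrix n m R) (E : Matrix n n R) (F : Matrix m m R) : Prop :=
  X * A * X = X ∧ X * A = E ∧ A * X = F

namespace IsEFInverse

variable {m n : Type*} [Fintype m] [Fintype n]
  {A : Matrix m n R} {X : Matrix n m R} {E : Matrix n n R} {F : Matrix m m R}

theorem isIdempotentElem_left (h : IsEFInverse A X E F) : IsIdempotentElem E := by
  obtain ⟨hXAX, hXA, -⟩ := h
  rw [IsIdempotentElem, ← hXA, ← Matrix.mul_assoc, hXAX]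

theorem isIdempotentElem_right (h : IsEFInverse A X E F) : IsIdempotentElem F := by
  obtain ⟨hXAX, -, hAX⟩ := h
  rw [IsIdempotentElem, ← hAX, Matrix.mul_assoc, ← Matrix.mul_assoc X, hXAX]

theorem mul_left_eq_right_mul (h : IsEFInverse A X E F) : A * E = F * A := by
  obtain ⟨-, hXA, hAX⟩ := h
  rw [← hXA, ← hAX, Matrix.mul_assoc]

theorem of_conj {m' n' : Type*} [Fintype m'] [Fintype n'] [DecidableEq m'] [DecidableEq n']
    {D : Matrix m' n' R} {E' : Matrix n' n' R} {F' : Matrix m' m' R}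
    {P : Matrix m m' R} {P' : Matrix m' m R} {Q : Matrix n n' R} {Q' : Matrix n' n R}
    (hP : P' * P = 1) (hQ : Q' * Q = 1)
    (h : IsEFInverse (P * D * Q') X (Q * E' * Q') (P * F' * P')) :
    IsEFInverse D (Q' * X * P) E' F' := by
  obtain ⟨hXAX, hXA, hAX⟩ := h
  refine ⟨?_, ?_, ?_⟩
  · calc Q' * X * P * D * (Q' * X * P) = Q' * (X * (P * D * Q') * X) * P := by
          simp only [Matrix.mul_assoc]
      _ = Q' * X * P := by rw [hXAX]
  · calc Q' * X * P * D = Q' * (X * (P * D * Q')) * Q := by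
          simp only [Matrix.mul_assoc, hQ, Matrix.mul_one]
      _ = Q' * Q * E' * (Q' * Q) := by rw [hXA]; simp only [Matrix.mul_assoc]
      _ = E' := by rw [hQ, Matrix.one_mul, Matrix.mul_one]
  · calc D * (Q' * X * P) = P' * (P * D * Q' * X) * P := by
          simp only [← Matrix.mul_assoc, hP, Matrix.one_mul]
      _ = P' * P * F' * (P' * P) := by rw [hAX]; simp only [Matrix.mul_assoc]
      _ = F' := by rw [hP, Matrix.one_mul, Matrix.mul_one]

theorem block_identities_of_fromBlocks_zero {l m o p : Type*} [Fintype l] [Fintype m] [Fintype o] [Fintype p]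
    {S : Matrix l m R} {Y : Matrix (m ⊕ o) (l ⊕ p) R}
    {E₁ : Matrix m m R} {E₂ : Matrix m o R} {E₃ : Matrix o m R} {E₄ : Matrix o o R}
    {F₁ : Matrix l l R} {F₂ : Matrix l p R} {F₃ : Matrix p l R} {F₄ : Matrix p p R}
    (h : IsEFInverse (fromBlocks S 0 0 0) Y (fromBlocks E₁ E₂ E₃ E₄) (fromBlocks F₁ F₂ F₃ F₄)) :
    E₂ = 0 ∧ E₄ = 0 ∧ F₃ = 0 ∧ F₄ = 0 ∧
    E₁ * E₁ = E₁ ∧ F₁ * F₁ = F₁ ∧ S * E₁ = F₁ * S ∧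
    E₃ * E₁ = E₃ ∧ F₁ * F₂ = F₂ := by
  obtain ⟨rfl, rfl⟩ : E₂ = 0 ∧ E₄ = 0 := by
    have hYD := h.2.1
    rw [mul_fromBlocks_zero, fromBlocks_inj] at hYD
    exact ⟨hYD.2.1.symm, hYD.2.2.2.symm⟩
  obtain ⟨rfl, rfl⟩ : F₃ = 0 ∧ F₄ = 0 := by
    have hDY := h.2.2
    rw [fromBlocks_zero_mul, fromBlocks_inj] at hDY
    exact ⟨hDY.2.2.1.symm, hDY.2.2.2.symm⟩
  obtain ⟨hE₁, hE₃⟩ := isIdempotentElem_fromBlocks_zero_right_iff.1 h.isIdempotentElem_left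
  obtain ⟨hF₁, hF₂⟩ := isIdempotentElem_fromBlocks_zero_bottom_iff.1 h.isIdempotentElem_right
  have hSE : S * E₁ = F₁ * S := by
    simpa [fromBlocks_multiply] using h.mul_left_eq_right_mul
  exact ⟨rfl, rfl, rfl, rfl, hE₁, hF₁, hSE, hE₃, hF₂⟩

end IsEFInverse

theorem ef_inverse_canonical_form_necessary_general {r s t : ℕ}
    (U : Matrix (Fin r ⊕ Fin s) (Fin r ⊕ Fin s) ℂ)
    (V : Matrix (Fin r ⊕ Fin t) (Fin r ⊕ Fin t) ℂ)
    (hU : U * Uᴴ = 1 ∧ Uᴴ * U = 1) (hV : V * Vᴴ = 1 ∧ Vᴴ * V = 1)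
    (S : Matrix (Fin r) (Fin r) ℂ)
    (E₁ : Matrix (Fin r) (Fin r) ℂ) (E₂ : Matrix (Fin r) (Fin t) ℂ)
    (E₃ : Matrix (Fin t) (Fin r) ℂ) (E₄ : Matrix (Fin t) (Fin t) ℂ)
    (F₁ : Matrix (Fin r) (Fin r) ℂ) (F₂ : Matrix (Fin r) (Fin s) ℂ)
    (F₃ : Matrix (Fin s) (Fin r) ℂ) (F₄ : Matrix (Fin s) (Fin s) ℂ)
    (A : Matrix (Fin r ⊕ Fin s) (Fin r ⊕ Fin t) ℂ)
    (hA : A = U * (Matrix.fromBlocks S 0 0 0 : Matrix (Fin r ⊕ Fin s) (Fin r ⊕ Fin t) ℂ) * Vᴴ)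
    (E : Matrix (Fin r ⊕ Fin t) (Fin r ⊕ Fin t) ℂ)
    (hE : E = V * Matrix.fromBlocks E₁ E₂ E₃ E₄ * Vᴴ)
    (F : Matrix (Fin r ⊕ Fin s) (Fin r ⊕ Fin s) ℂ)
    (hF : F = U * Matrix.fromBlocks F₁ F₂ F₃ F₄ * Uᴴ)
    (hex : ∃ X : Matrix (Fin r ⊕ Fin t) (Fin r ⊕ Fin s) ℂ,
      X * A * X = X ∧ X * A = E ∧ A * X = F) :
    E₂ = 0 ∧ E₄ = 0 ∧ F₃ = 0 ∧ F₄ = 0 ∧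
    E₁ * E₁ = E₁ ∧ F₁ * F₁ = F₁ ∧ S * E₁ = F₁ * S ∧
    E₃ * E₁ = E₃ ∧ F₁ * F₂ = F₂ := by
  obtain ⟨X, hX⟩ := hex
  subst hA hE hF
  exact (IsEFInverse.of_conj hU.2 hV.2 hX).block_identities_of_fromBlocks_zero

theorem ef_inverse_canonical_form_necessary {r s t : ℕ}
    (U : Matrix (Fin r ⊕ Fin s) (Fin r ⊕ Fin s) ℂ)
    (V : Matrix (Fin r ⊕ Fin t) (Fin r ⊕ Fin t) ℂ)
    (hU : U * Uᴴ = 1 ∧ Uᴴ * U = 1) (hV : V * Vᴴ = 1 ∧ Vᴴ * V = 1)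
    (S : Matrix (Fin r) (Fin r) ℂ) [Invertible S]
    (E₁ : Matrix (Fin r) (Fin r) ℂ) (E₂ : Matrix (Fin r) (Fin t) ℂ)
    (E₃ : Matrix (Fin t) (Fin r) ℂ) (E₄ : Matrix (Fin t) (Fin t) ℂ)
    (F₁ : Matrix (Fin r) (Fin r) ℂ) (F₂ : Matrix (Fin r) (Fin s) ℂ)
    (F₃ : Matrix (Fin s) (Fin r) ℂ) (F₄ : Matrix (Fin s) (Fin s) ℂ)
    (A : Matrix (Fin r ⊕ Fin s) (Fin r ⊕ Fin t) ℂ)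
    (hA : A = U * (Matrix.fromBlocks S 0 0 0 : Matrix (Fin r ⊕ Fin s) (Fin r ⊕ Fin t) ℂ) * Vᴴ)
    (E : Matrix (Fin r ⊕ Fin t) (Fin r ⊕ Fin t) ℂ)
    (hE : E = V * Matrix.fromBlocks E₁ E₂ E₃ E₄ * Vᴴ)
    (F : Matrix (Fin r ⊕ Fin s) (Fin r ⊕ Fin s) ℂ)
    (hF : F = U * Matrix.fromBlocks F₁ F₂ F₃ F₄ * Uᴴ)
    (hex : ∃ X : Matrix (Fin r ⊕ Fin t) (Fin r ⊕ Fin s) ℂ,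
      X * A * X = X ∧ X * A = E ∧ A * X = F) :
    E₂ = 0 ∧ E₄ = 0 ∧ F₃ = 0 ∧ F₄ = 0 ∧
    E₁ * E₁ = E₁ ∧ F₁ * F₁ = F₁ ∧ S * E₁ = F₁ * S ∧
    E₃ * E₁ = E₃ ∧ F₁ * F₂ = F₂ :=
  ef_inverse_canonical_form_necessary_general U V hU hV S E₁ E₂ E₃ E₄ F₁ F₂ F₃ F₄ A hA E hE F hF hex
end

section
/- Let A ∈ ℂ^{m×n}, X₁, X₂ ∈ ℂ^{n×m} with X₁AX₁ = X₁ (outer inverse) and AX₂A = A (inner inverse). Then X := X₁AX₂ satisfies XAX = X, XA = X₁A, and AX = AX₁AX₂. In particular, X is the EF-inverse of A with E = X₁A and F = AX₁AX₂. -/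
namespace Matrix

variable {k m n R : Type*} [Fintype m] [Fintype n] [NonUnitalSemiring R]

theorem mul_mul_inner_mul_eq {A : Matrix m n R} {X₂ : Matrix n m R}
    (hinner : A * X₂ * A = A) (X₁ : Matrix k m R) :
    X₁ * A * X₂ * A = X₁ * A := by
  rw [Matrix.mul_assoc X₁, Matrix.mul_assoc X₁, hinner]

theorem mul_mul_mul_eq_self_of_outer_of_inner {A : Matrix m n R} {X₁ X₂ : Matrix n m R}
    (houter : X₁ * A * X₁ = X₁) (hinner : A * X₂ * A = A) :
    X₁ * A * X₂ * A * (X₁ * A * X₂) = X₁ * A * X₂ :=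
  calc X₁ * A * X₂ * A * (X₁ * A * X₂)
      = X₁ * A * (X₁ * A * X₂) := by rw [mul_mul_inner_mul_eq hinner]
    _ = (X₁ * A * X₁) * A * X₂ := by simp only [Matrix.mul_assoc]
    _ = X₁ * A * X₂ := by rw [houter]

end Matrix

theorem bilateral_inverse_is_ef {m n : ℕ} (A : Matrix (Fin m) (Fin n) ℂ)
    (X₁ X₂ : Matrix (Fin n) (Fin m) ℂ)
    (houter : X₁ * A * X₁ = X₁) (hinner : A * X₂ * A = A) :
    (X₁ * A * X₂) * A * (X₁ * A * X₂) = X₁ * A * X₂ ∧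
    (X₁ * A * X₂) * A = X₁ * A ∧
    A * (X₁ * A * X₂) = A * X₁ * A * X₂ :=
  ⟨Matrix.mul_mul_mul_eq_self_of_outer_of_inner houter hinner,
    Matrix.mul_mul_inner_mul_eq hinner X₁, by simp only [Matrix.mul_assoc]⟩
end

section
/- Let A ∈ ℂ^{m×n}, X₁, X₂ ∈ ℂ^{n×m} with X₁AX₁ = X₁ and AX₂A = A. Then X := X₂AX₁ satisfies XAX = X, XA = X₂AX₁A, and AX = AX₁. In particular, X is the EF-inverse of A with E = X₂AX₁A and F = AX₁. -/
namespace Matrix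

variable {m n p α : Type*} [Fintype m] [Fintype n] [NonUnitalSemiring α]

theorem mul_inner_inverse_mul_mul {A : Matrix m n α} {X₂ : Matrix n m α}
    (hinner : A * X₂ * A = A) (X : Matrix n p α) : A * (X₂ * A * X) = A * X := by
  calc A * (X₂ * A * X) = A * X₂ * A * X := by simp only [Matrix.mul_assoc]
    _ = A * X := by rw [hinner]

theorem inner_mul_mul_outer_mul_mul_self {A : Matrix m n α} {X₁ X₂ : Matrix n m α}
    (houter : X₁ * A * X₁ = X₁) (hinner : A * X₂ * A = A) :
    (X₂ * A * X₁) * A * (X₂ * A * X₁) = X₂ * A * X₁ := by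
  calc (X₂ * A * X₁) * A * (X₂ * A * X₁) = X₂ * A * X₁ * (A * (X₂ * A * X₁)) := by
        simp only [Matrix.mul_assoc]
    _ = X₂ * A * (X₁ * A * X₁) := by
        rw [mul_inner_inverse_mul_mul hinner]; simp only [Matrix.mul_assoc]
    _ = X₂ * A * X₁ := by rw [houter]

end Matrix

theorem dual_bilateral_inverse_is_ef {m n : ℕ} (A : Matrix (Fin m) (Fin n) ℂ)
    (X₁ X₂ : Matrix (Fin n) (Fin m) ℂ)
    (houter : X₁ * A * X₁ = X₁) (hinner : A * X₂ * A = A) :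
    (X₂ * A * X₁) * A * (X₂ * A * X₁) = X₂ * A * X₁ ∧
    (X₂ * A * X₁) * A = X₂ * A * X₁ * A ∧
    A * (X₂ * A * X₁) = A * X₁ :=
  ⟨Matrix.inner_mul_mul_outer_mul_mul_self houter hinner, rfl,
    Matrix.mul_inner_inverse_mul_mul hinner X₁⟩
end
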